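/- arXiv:1608.08871 — 3 statements merged into one kernel-verified Lean document; each statement's English description precedes it below -/
import Mathlib

section
/- In the setting of the previous result (measurable Ω with finite measure |Ω|; nonnegative partition of unity {φ_j} on Ω subordinate to balls of radius h at nodes x_j; |A(x_j)| ≤ M₀; ‖∇²φ‖ ≤ M₂ everywhere; u = A e^{iωφ}; u_I = Σ_j A(x_j)φ_j e^{iωℓ_j} with ℓ_j(x) = φ(x_j) + ⟨∇φ(x_j), x − x_j⟩), assume additionally that ‖A − Σ_{j∈J} A(x_j)φ_j‖_{L²(Ω)} ≤ C_A h², that ω ≥ 1, and that h ≤ 1/ω. Then ‖u − u_I‖_{L²(Ω)} ≤ (C_A + M₂ M₀ |Ω|^{1/2}/2)·ω^{-1}. -/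
/-!
On `Ω` the error splits as `(A - Σⱼ A(xⱼ)φⱼ) e^{iωφ} + Σⱼ φⱼ A(xⱼ) (e^{iωφ} - e^{iωℓⱼ})`. Only nodes
with `‖x - xⱼ‖ ≤ h` contribute, and there Taylor's theorem gives `|φ - ℓⱼ| ≤ M₂h²/2`, so the second
sum is pointwise at most `M₀ ω M₂ h²/2 ≤ M₀M₂/(2ω)`. Minkowski's inequality against this constant
adds `M₀M₂|Ω|^{1/2}/(2ω)` to the `L²` interpolation error `C_A h² ≤ C_A ω⁻¹`.
-/

open Complex MeasureTheory
open scoped InnerProductSpace BigOperators ENNReal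

namespace MeasureTheory

variable {α ε ε' : Type*} [MeasurableSpace α] {μ : Measure α} [ENorm ε] [ENorm ε']

theorem exists_measurable_le_eLpNorm_eq {p : ℝ≥0∞} (hp0 : p ≠ 0) (hp : p ≠ ∞) (f : α → ε) :
    ∃ k : α → ℝ≥0∞, Measurable k ∧ (∀ x, k x ≤ ‖f x‖ₑ) ∧ eLpNorm k p μ = eLpNorm f p μ := by
  have hq : 0 < p.toReal := ENNReal.toReal_pos hp0 hp
  obtain ⟨k, hk, hkf, hint⟩ := exists_measurable_le_lintegral_eq μ fun x => ‖f x‖ₑ ^ p.toReal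
  refine ⟨fun x => k x ^ p.toReal⁻¹, hk.pow_const _, fun x => ?_, ?_⟩
  · simpa [← ENNReal.rpow_mul, hq.ne'] using ENNReal.rpow_le_rpow (hkf x) (inv_nonneg.2 hq.le)
  · simp [eLpNorm_eq_lintegral_rpow_enorm_toReal hp0 hp, ← ENNReal.rpow_mul, hq.ne', hint]

/-- No measurability is assumed: since `∫⁻` is a lower integral, `f` can be replaced by a measurable
minorant of `‖f‖ₑ` with the same norm, to which the measurable Minkowski inequality applies. -/
theorem eLpNorm_le_eLpNorm_add_const {p : ℝ≥0∞} (hp : 1 ≤ p) {f : α → ε} {g : α → ε'} {c : ℝ≥0∞}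
    (hfg : ∀ᵐ x ∂μ, ‖f x‖ₑ ≤ ‖g x‖ₑ + c) :
    eLpNorm f p μ ≤ eLpNorm g p μ + c * μ Set.univ ^ (1 / p.toReal) := by
  have hp0 : p ≠ 0 := (zero_lt_one.trans_le hp).ne'
  rcases eq_or_ne μ 0 with rfl | hμ
  · simp
  rcases eq_or_ne p ∞ with rfl | hp_top
  · simp only [eLpNorm_exponent_top, ENNReal.toReal_top, div_zero, ENNReal.rpow_zero, mul_one]
    calc eLpNormEssSup f μ ≤ essSup (fun x => ‖g x‖ₑ + c) μ := essSup_mono_ae hfg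
      _ ≤ eLpNormEssSup g μ + essSup (fun _ => c) μ := ENNReal.essSup_add_le _ _
      _ = eLpNormEssSup g μ + c := by rw [essSup_const _ hμ]
  obtain ⟨k, hk, hkf, hkf_eq⟩ := exists_measurable_le_eLpNorm_eq (μ := μ) hp0 hp_top f
  have hk_split : ∀ x, k x ≤ (k x - c) + c := fun x => le_tsub_add
  calc eLpNorm f p μ = eLpNorm k p μ := hkf_eq.symm
    _ ≤ eLpNorm ((fun x => k x - c) + fun _ => c) p μ := eLpNorm_mono_enorm hk_split
    _ ≤ eLpNorm (fun x => k x - c) p μ + eLpNorm (fun _ => c) p μ :=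
        eLpNorm_add_le (hk.sub_const c).aestronglyMeasurable aestronglyMeasurable_const hp
    _ ≤ eLpNorm g p μ + c * μ Set.univ ^ (1 / p.toReal) := by
        rw [eLpNorm_const' c hp0 hp_top, enorm_eq_self]
        gcongr 1
        refine eLpNorm_mono_enorm_ae (hfg.mono fun x hx => ?_)
        exact tsub_le_iff_right.2 ((hkf x).trans hx)

end MeasureTheory

theorem norm_image_sub_sub_fderiv_le {E F : Type*} [NormedAddCommGroup E] [NormedSpace ℝ E]
    [NormedAddCommGroup F] [NormedSpace ℝ F] {f : E → F} (hf : Differentiable ℝ f) {M : ℝ}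
    {x₀ : E} (hf' : ∀ y, ‖fderiv ℝ f y - fderiv ℝ f x₀‖ ≤ M * ‖y - x₀‖) (x : E) :
    ‖f x - f x₀ - fderiv ℝ f x₀ (x - x₀)‖ ≤ M / 2 * ‖x - x₀‖ ^ 2 := by
  set v := x - x₀
  let g : ℝ → F := fun t => f (x₀ + t • v) - t • fderiv ℝ f x₀ v - f x₀
  have hg : ∀ t, HasDerivAt g (fderiv ℝ f (x₀ + t • v) v - fderiv ℝ f x₀ v) t := by
    intro t
    have hline : HasDerivAt (fun s : ℝ => x₀ + s • v) v t := by
      simpa using ((hasDerivAt_id t).smul_const v).const_add x₀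
    have := (((hf _).hasFDerivAt.comp_hasDerivAt t hline).sub
      ((hasDerivAt_id' t).smul_const (fderiv ℝ f x₀ v))).sub_const (f x₀)
    rwa [one_smul] at this
  have hg_le : ∀ t ∈ Set.Ico (0 : ℝ) 1,
      ‖fderiv ℝ f (x₀ + t • v) v - fderiv ℝ f x₀ v‖ ≤ M * ‖v‖ ^ 2 * t := by
    intro t ht
    calc ‖fderiv ℝ f (x₀ + t • v) v - fderiv ℝ f x₀ v‖
        ≤ ‖fderiv ℝ f (x₀ + t • v) - fderiv ℝ f x₀‖ * ‖v‖ :=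
          (fderiv ℝ f (x₀ + t • v) - fderiv ℝ f x₀).le_opNorm v
      _ ≤ M * ‖t • v‖ * ‖v‖ := by
          gcongr
          simpa using hf' (x₀ + t • v)
      _ = M * ‖v‖ ^ 2 * t := by rw [norm_smul, Real.norm_of_nonneg ht.1]; ring
  have hbound : ∀ t, HasDerivAt (fun t => M * ‖v‖ ^ 2 * (t ^ 2 / 2)) (M * ‖v‖ ^ 2 * t) t := by
    intro t
    refine (((hasDerivAt_pow 2 t).div_const 2).const_mul (M * ‖v‖ ^ 2)).congr_deriv ?_
    ring
  have := image_norm_le_of_norm_deriv_right_le_deriv_boundary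
    (fun t _ => (hg t).continuousAt.continuousWithinAt) (fun t _ => (hg t).hasDerivWithinAt)
    (by simp [g]) hbound hg_le (Set.right_mem_Icc.2 zero_le_one)
  convert this using 1
  · simp only [g, v, one_smul, add_sub_cancel, sub_right_comm]
  · ring

theorem norm_exp_I_mul_sub_exp_I_mul_le (a b : ℝ) :
    ‖exp (I * a) - exp (I * b)‖ ≤ |a - b| := by
  have h : exp (I * a) - exp (I * b) = exp (I * b) * (exp (I * ↑(a - b)) - 1) := by
    rw [mul_sub, mul_one, ← Complex.exp_add]
    congr 2
    push_cast
    ring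
  rw [h, norm_mul, Complex.norm_exp_I_mul_ofReal, one_mul, ← Real.norm_eq_abs]
  exact Real.norm_exp_I_mul_ofReal_sub_one_le

theorem norm_sum_smul_le_of_sum_eq_one {ι E : Type*} [SeminormedAddCommGroup E] [NormedSpace ℝ E]
    {s : Finset ι} {w : ι → ℝ} {z : ι → E} {C : ℝ} (hw₀ : ∀ j ∈ s, 0 ≤ w j)
    (hw₁ : ∑ j ∈ s, w j = 1) (hz : ∀ j ∈ s, w j ≠ 0 → ‖z j‖ ≤ C) :
    ‖∑ j ∈ s, w j • z j‖ ≤ C := by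
  calc ‖∑ j ∈ s, w j • z j‖ ≤ ∑ j ∈ s, w j * ‖z j‖ := by
        refine (norm_sum_le _ _).trans (Finset.sum_le_sum fun j hj => ?_)
        rw [norm_smul, Real.norm_of_nonneg (hw₀ j hj)]
    _ ≤ ∑ j ∈ s, w j * C := by
        refine Finset.sum_le_sum fun j hj => ?_
        rcases eq_or_ne (w j) 0 with h | h
        · simp [h]
        · exact mul_le_mul_of_nonneg_left (hz j hj h) (hw₀ j hj)
    _ = C := by rw [← Finset.sum_mul, hw₁, one_mul]

section Linearization

variable {E : Type*} [NormedAddCommGroup E] [InnerProductSpace ℝ E] [CompleteSpace E]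

/-- The phase `ℓⱼ` of the ray-FEM basis function at the node `x₀`. -/
noncomputable def linearization (φ : E → ℝ) (x₀ x : E) : ℝ :=
  φ x₀ + ⟪gradient φ x₀, x - x₀⟫_ℝ

theorem abs_sub_linearization_le {φ : E → ℝ} (hφ : ContDiff ℝ 2 φ) {M : ℝ}
    (hM : ∀ y, ‖fderiv ℝ (fun z => fderiv ℝ φ z) y‖ ≤ M) (x₀ x : E) :
    |φ x - linearization φ x₀ x| ≤ M / 2 * ‖x - x₀‖ ^ 2 := by
  have hφ' : Differentiable ℝ (fderiv ℝ φ) :=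
    (hφ.fderiv_right (m := 1) (by norm_num)).differentiable (by norm_num)
  have hlip : ∀ y, ‖fderiv ℝ φ y - fderiv ℝ φ x₀‖ ≤ M * ‖y - x₀‖ := fun y =>
    convex_univ.norm_image_sub_le_of_norm_fderiv_le (fun z _ => hφ' z) (fun z _ => hM z)
      (Set.mem_univ x₀) (Set.mem_univ y)
  rw [linearization, ← sub_sub, gradient, InnerProductSpace.toDual_symm_apply,
    ← Real.norm_eq_abs]
  exact norm_image_sub_sub_fderiv_le (hφ.differentiable (by norm_num)) hlip x

theorem norm_mul_exp_sub_sum_mul_exp_le {ι : Type*} {s : Finset ι} {a ω θ M K : ℝ}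
    {aj w θj : ι → ℝ} (hω : 0 ≤ ω) (hw₀ : ∀ j ∈ s, 0 ≤ w j) (hw₁ : ∑ j ∈ s, w j = 1)
    (haj : ∀ j ∈ s, |aj j| ≤ M) (hθ : ∀ j ∈ s, w j ≠ 0 → |θ - θj j| ≤ K) :
    ‖(a : ℂ) * exp (I * ω * θ) - ∑ j ∈ s, (aj j : ℂ) * (w j : ℂ) * exp (I * ω * (θj j))‖
      ≤ |a - ∑ j ∈ s, aj j * w j| + M * (ω * K) := by
  set e := exp (I * ω * θ)
  have hsplit : (a : ℂ) * e - ∑ j ∈ s, (aj j : ℂ) * (w j : ℂ) * exp (I * ω * (θj j))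
      = ((a - ∑ j ∈ s, aj j * w j : ℝ) : ℂ) * e
        + ∑ j ∈ s, w j • ((aj j : ℂ) * (e - exp (I * ω * (θj j)))) := by
    rw [Finset.sum_congr rfl fun j _ => show w j • ((aj j : ℂ) * (e - exp (I * ω * (θj j))))
        = (aj j : ℂ) * w j * e - aj j * w j * exp (I * ω * (θj j)) by
          rw [Complex.real_smul]; ring,
      Finset.sum_sub_distrib, ← Finset.sum_mul]
    push_cast
    ring
  have hterm : ∀ j ∈ s, w j ≠ 0 → ‖(aj j : ℂ) * (e - exp (I * ω * (θj j)))‖ ≤ M * (ω * K) := by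
    intro j hj hwj
    have hphase : ‖e - exp (I * ω * (θj j))‖ ≤ ω * K := by
      have := norm_exp_I_mul_sub_exp_I_mul_le (ω * θ) (ω * θj j)
      rw [← mul_sub, abs_mul, abs_of_nonneg hω] at this
      push_cast at this
      simp only [← mul_assoc] at this
      exact this.trans (mul_le_mul_of_nonneg_left (hθ j hj hwj) hω)
    rw [norm_mul, Complex.norm_real, Real.norm_eq_abs]
    exact mul_le_mul (haj j hj) hphase (norm_nonneg _) ((abs_nonneg _).trans (haj j hj))
  calc _ ≤ ‖((a - ∑ j ∈ s, aj j * w j : ℝ) : ℂ) * e‖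
        + ‖∑ j ∈ s, w j • ((aj j : ℂ) * (e - exp (I * ω * (θj j))))‖ := by
        rw [hsplit]; exact norm_add_le _ _
    _ ≤ |a - ∑ j ∈ s, aj j * w j| + M * (ω * K) := by
        gcongr
        · rw [norm_mul, Complex.norm_real, Real.norm_eq_abs, Complex.norm_exp]
          simp
        · exact norm_sum_smul_le_of_sum_eq_one hw₀ hw₁ hterm

theorem norm_mul_exp_sub_sum_mul_exp_linearization_le {ι : Type*} {s : Finset ι} {xj : ι → E}
    {w : ι → ℝ} {A φ : E → ℝ} {h ω M₀ M₂ : ℝ} {x : E} (hφ : ContDiff ℝ 2 φ)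
    (hM₂ : ∀ y, ‖fderiv ℝ (fun z => fderiv ℝ φ z) y‖ ≤ M₂) (hω : 0 ≤ ω)
    (hw₀ : ∀ j ∈ s, 0 ≤ w j) (hw₁ : ∑ j ∈ s, w j = 1) (hw_supp : ∀ j ∈ s, w j ≠ 0 → ‖x - xj j‖ ≤ h)
    (hM₀ : ∀ j ∈ s, |A (xj j)| ≤ M₀) :
    ‖(A x : ℂ) * exp (I * ω * φ x)
        - ∑ j ∈ s, (A (xj j) : ℂ) * (w j : ℂ) * exp (I * ω * linearization φ (xj j) x)‖
      ≤ |A x - ∑ j ∈ s, A (xj j) * w j| + M₀ * (ω * (M₂ / 2 * h ^ 2)) := by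
  have hM₂_nonneg : 0 ≤ M₂ := (ContinuousLinearMap.opNorm_nonneg _).trans (hM₂ x)
  refine norm_mul_exp_sub_sum_mul_exp_le hω hw₀ hw₁ hM₀ fun j hj hwj => ?_
  calc |φ x - linearization φ (xj j) x| ≤ M₂ / 2 * ‖x - xj j‖ ^ 2 :=
        abs_sub_linearization_le hφ hM₂ (xj j) x
    _ ≤ M₂ / 2 * h ^ 2 := by gcongr; exact hw_supp j hj hwj

end Linearization

theorem mul_sq_le_inv_of_le_one_div {h ω : ℝ} (hh : 0 ≤ h) (hω : 0 < ω) (hhω : h ≤ 1 / ω) :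
    ω * h ^ 2 ≤ ω⁻¹ := by
  rw [one_div] at hhω
  calc ω * h ^ 2 ≤ ω * (ω⁻¹ * ω⁻¹) := by rw [sq]; gcongr
    _ = ω⁻¹ := by field_simp

theorem stmt_6_general {d : ℕ} {ι : Type*} (J : Finset ι)
    (Ω : Set (EuclideanSpace ℝ (Fin d)))
    (hΩmeas : MeasurableSet Ω) (hΩfin : volume Ω < ⊤)
    (h : ℝ) (hh : 0 < h)
    (xj : ι → EuclideanSpace ℝ (Fin d))
    (φj : ι → EuclideanSpace ℝ (Fin d) → ℝ)
    (hφj : ∀ j ∈ J, ∀ x, 0 ≤ φj j x ∧ φj j x ≤ 1)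
    (hsum : ∀ x ∈ Ω, ∑ j ∈ J, φj j x = 1)
    (hsupp : ∀ j ∈ J, ∀ x, h < ‖x - xj j‖ → φj j x = 0)
    (A : EuclideanSpace ℝ (Fin d) → ℝ)
    (M₀ : ℝ) (hM₀ : ∀ j ∈ J, |A (xj j)| ≤ M₀)
    (φ : EuclideanSpace ℝ (Fin d) → ℝ) (hφ : ContDiff ℝ 2 φ)
    (M₂ : ℝ) (hM₂ : ∀ y, ‖fderiv ℝ (fun z => fderiv ℝ φ z) y‖ ≤ M₂)
    (ω : ℝ) (hω : 1 ≤ ω) (hhω : h ≤ 1 / ω)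
    (CA : ℝ) (hCA0 : 0 ≤ CA)
    (hCA : eLpNorm (fun x => A x - ∑ j ∈ J, A (xj j) * φj j x) 2 (volume.restrict Ω)
        ≤ ENNReal.ofReal (CA * h ^ 2)) :
    eLpNorm (fun x => (A x : ℂ) * Complex.exp (Complex.I * (ω : ℂ) * (φ x : ℂ))
        - ∑ j ∈ J, (A (xj j) : ℂ) * (φj j x : ℂ)
            * Complex.exp (Complex.I * (ω : ℂ)
                * ((φ (xj j) + ⟪gradient φ (xj j), x - xj j⟫_ℝ : ℝ) : ℂ)))
      2 (volume.restrict Ω)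
    ≤ ENNReal.ofReal ((CA + M₂ * M₀ * Real.sqrt (volume Ω).toReal / 2) * ω⁻¹) := by
  rcases eq_or_ne (volume Ω) 0 with hvol | hvol
  · simp [Measure.restrict_eq_zero.mpr hvol]
  -- a non-null `Ω` meets the support of some `φⱼ`, and that node gives `0 ≤ M₀`
  obtain ⟨x₀, hx₀⟩ := nonempty_of_measure_ne_zero hvol
  obtain ⟨j₀, hj₀, -⟩ := Finset.exists_ne_zero_of_sum_ne_zero (s := J) (f := (φj · x₀))
    (by rw [hsum x₀ hx₀]; exact one_ne_zero)
  have hM₀_nonneg : 0 ≤ M₀ := (abs_nonneg _).trans (hM₀ j₀ hj₀)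
  have hM₂_nonneg : 0 ≤ M₂ := (ContinuousLinearMap.opNorm_nonneg _).trans (hM₂ 0)
  have hω₀ : 0 < ω := one_pos.trans_le hω
  have hωh : ω * h ^ 2 ≤ ω⁻¹ := mul_sq_le_inv_of_le_one_div hh.le hω₀ hhω
  have hh₂ : h ^ 2 ≤ ω⁻¹ := (le_mul_of_one_le_left (by positivity) hω).trans hωh
  have hvol_half : volume.restrict Ω Set.univ ^ (1 / (2 : ℝ≥0∞).toReal)
      = ENNReal.ofReal √(volume Ω).toReal := by
    rw [Measure.restrict_apply_univ, Real.sqrt_eq_rpow, ← ENNReal.ofReal_rpow_of_nonneg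
      ENNReal.toReal_nonneg (by norm_num), ENNReal.ofReal_toReal hΩfin.ne]
    norm_num
  calc _ ≤ ENNReal.ofReal (CA * h ^ 2) + ENNReal.ofReal (M₀ * (ω * (M₂ / 2 * h ^ 2)))
        * volume.restrict Ω Set.univ ^ (1 / (2 : ℝ≥0∞).toReal) := by
        refine (eLpNorm_le_eLpNorm_add_const one_le_two ?_).trans (by gcongr)
        filter_upwards [ae_restrict_mem hΩmeas] with x hx
        rw [← ofReal_norm, ← ofReal_norm, ← ENNReal.ofReal_add (norm_nonneg _) (by positivity)]
        exact ENNReal.ofReal_le_ofReal (norm_mul_exp_sub_sum_mul_exp_linearization_le hφ hM₂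
          hω₀.le (fun j hj => (hφj j hj x).1) (hsum x hx)
          (fun j hj hjx => not_lt.1 (mt (hsupp j hj x) hjx)) hM₀)
    _ = ENNReal.ofReal (CA * h ^ 2 + M₀ * (ω * (M₂ / 2 * h ^ 2)) * √(volume Ω).toReal) := by
        rw [hvol_half, ← ENNReal.ofReal_mul (by positivity),
          ← ENNReal.ofReal_add (by positivity) (by positivity)]
    _ ≤ _ := by
        gcongr
        have := mul_le_mul_of_nonneg_left hωh (by positivity : 0 ≤ M₂ * M₀ * √(volume Ω).toReal)
        linarith [mul_le_mul_of_nonneg_left hh₂ hCA0]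

/-- `O(ω⁻¹)` approximation rate of the ray-FEM space with exact ray directions: in the
fixed-points-per-wavelength regime `h ≤ 1/ω`, `ω ≥ 1`, if the `P1` interpolation of the
amplitude is second-order accurate, `‖A − Σⱼ A(xⱼ)φⱼ‖_{L²(Ω)} ≤ C_A h²`, then
`‖u − u_I‖_{L²(Ω)} ≤ (C_A + M₂M₀|Ω|^{1/2}/2)ω⁻¹`. -/
theorem stmt_6 {d : ℕ} (hd : 1 ≤ d) {ι : Type*} (J : Finset ι)
    (Ω : Set (EuclideanSpace ℝ (Fin d)))
    (hΩmeas : MeasurableSet Ω) (hΩfin : volume Ω < ⊤)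
    (h : ℝ) (hh : 0 < h)
    (xj : ι → EuclideanSpace ℝ (Fin d))
    (φj : ι → EuclideanSpace ℝ (Fin d) → ℝ)
    (hφj : ∀ j ∈ J, ∀ x, 0 ≤ φj j x ∧ φj j x ≤ 1)
    (hsum : ∀ x ∈ Ω, ∑ j ∈ J, φj j x = 1)
    (hsupp : ∀ j ∈ J, ∀ x, h < ‖x - xj j‖ → φj j x = 0)
    (A : EuclideanSpace ℝ (Fin d) → ℝ)
    (M₀ : ℝ) (hM₀ : ∀ j ∈ J, |A (xj j)| ≤ M₀)
    (φ : EuclideanSpace ℝ (Fin d) → ℝ) (hφ : ContDiff ℝ 2 φ)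
    (M₂ : ℝ) (hM₂ : ∀ y, ‖fderiv ℝ (fun z => fderiv ℝ φ z) y‖ ≤ M₂)
    (ω : ℝ) (hω : 1 ≤ ω) (hhω : h ≤ 1 / ω)
    (CA : ℝ) (hCA0 : 0 ≤ CA)
    (hCA : eLpNorm (fun x => A x - ∑ j ∈ J, A (xj j) * φj j x) 2 (volume.restrict Ω)
        ≤ ENNReal.ofReal (CA * h ^ 2)) :
    eLpNorm (fun x => (A x : ℂ) * Complex.exp (Complex.I * (ω : ℂ) * (φ x : ℂ))
        - ∑ j ∈ J, (A (xj j) : ℂ) * (φj j x : ℂ)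
            * Complex.exp (Complex.I * (ω : ℂ)
                * ((φ (xj j) + ⟪gradient φ (xj j), x - xj j⟫_ℝ : ℝ) : ℂ)))
      2 (volume.restrict Ω)
    ≤ ENNReal.ofReal ((CA + M₂ * M₀ * Real.sqrt (volume Ω).toReal / 2) * ω⁻¹) :=
  stmt_6_general J Ω hΩmeas hΩfin h hh xj φj hφj hsum hsupp A M₀ hM₀ φ hφ M₂ hM₂ ω hω hhω CA hCA0
    hCA
end

section
/- Let L ≥ 1 be a natural number, B₁ ∈ ℂ with B₁ ≠ 0, θ₁ ∈ ℝ, and let e : ℝ → ℂ satisfy |e(θ)| ≤ η for all θ, where η < |B₁|/4. Define G(θ) := B₁·S_L(θ − θ₁) + e(θ). Then for every θ* ∈ ℝ with |G(θ*)| ≥ |G(θ₁)|, there exists an integer m such that |θ* − θ₁ − 2πm| ≤ 2π/(2L+1). In particular any maximizer of |G| lies within angular distance 2π/(2L+1) of θ₁ modulo 2π. -/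
open Complex
open scoped BigOperators Real

/-- The normalized Dirichlet kernel `S_L(θ) = (2L+1)⁻¹ Σ_{l=−L}^{L} e^{ilθ}`. -/
noncomputable def dirichletS (L : ℕ) (θ : ℝ) : ℂ :=
  (2 * (L : ℂ) + 1)⁻¹ * ∑ l ∈ Finset.Icc (-(L : ℤ)) (L : ℤ),
    Complex.exp (Complex.I * (l : ℂ) * (θ : ℂ))

/-!
The Dirichlet kernel is a geometric sum: `(e^{iθ} - 1) Σ_{|l| ≤ L} e^{ilθ} = e^{i(L+1)θ} - e^{-iLθ}`,
so `|S_L(θ)| ≤ 2 / ((2L+1) |e^{iθ} - 1|)`, and Jordan's inequality `|sin(θ/2)| ≥ |θ|/π` bounds the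
chord `|e^{iθ} - 1|` below by `4/(2L+1)` when `2π/(2L+1) ≤ |θ| ≤ π`. Hence `|S_L| ≤ 1/2` off the
main lobe. If `θ*` were farther than `2π/(2L+1)` from `θ₁` modulo `2π`, then
`|G(θ*)| ≤ |B₁|/2 + η < |B₁| - η ≤ |G(θ₁)|`.
-/

open Finset

theorem sub_one_mul_sum_Icc_zpow {K : Type*} [Field K] {z : K} (hz : z ≠ 0) (N : ℕ) :
    (z - 1) * ∑ l ∈ Icc (-N : ℤ) N, z ^ l = z ^ ((N : ℤ) + 1) - z ^ (-N : ℤ) := by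
  have hstep : ∀ l : ℤ, (z - 1) * z ^ l = -(z ^ l - z ^ (l + 1)) := fun l => by
    rw [zpow_add_one₀ hz]; ring
  rw [mul_sum, sum_Icc_eq_sum_Ico_add _ (by omega), sum_congr rfl fun l _ => hstep l,
    sum_neg_distrib, sum_Ico_int_sub, hstep]
  ring

theorem norm_sum_Icc_zpow_le {K : Type*} [NormedField K] {z : K} (hz : ‖z‖ = 1) (N : ℕ) :
    ‖z - 1‖ * ‖∑ l ∈ Icc (-N : ℤ) N, z ^ l‖ ≤ 2 := by
  have hz0 : z ≠ 0 := norm_ne_zero_iff.mp (by rw [hz]; exact one_ne_zero)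
  calc ‖z - 1‖ * ‖∑ l ∈ Icc (-N : ℤ) N, z ^ l‖
      = ‖z ^ ((N : ℤ) + 1) - z ^ (-N : ℤ)‖ := by rw [← norm_mul, sub_one_mul_sum_Icc_zpow hz0]
    _ ≤ ‖z ^ ((N : ℤ) + 1)‖ + ‖z ^ (-N : ℤ)‖ := norm_sub_le _ _
    _ = 2 := by rw [norm_zpow, norm_zpow, hz, one_zpow, one_zpow]; norm_num

theorem two_div_pi_mul_abs_le_norm_exp_I_mul_sub_one {x : ℝ} (hx : |x| ≤ π) :
    2 / π * |x| ≤ ‖exp (I * x) - 1‖ := by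
  have hhalf : |x / 2| ≤ π / 2 := by rw [abs_div, abs_two]; linarith
  rw [norm_exp_I_mul_ofReal_sub_one, norm_mul, Real.norm_eq_abs, Real.norm_eq_abs, abs_two]
  have := Real.mul_abs_le_abs_sin hhalf
  rw [abs_div, abs_two] at this
  linarith

theorem dirichletS_eq (L : ℕ) (θ : ℝ) :
    dirichletS L θ = (2 * (L : ℂ) + 1)⁻¹ * ∑ l ∈ Icc (-(L : ℤ)) L, exp (I * θ) ^ l := by
  refine congrArg _ (sum_congr rfl fun l _ => ?_)
  rw [← exp_int_mul]
  ring_nf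

theorem dirichletS_zero (L : ℕ) : dirichletS L 0 = 1 := by
  have hcard : (#(Icc (-(L : ℤ)) L) : ℂ) = 2 * L + 1 := by
    rw [Int.card_Icc, show (L : ℤ) + 1 - -L = ((2 * L + 1 : ℕ) : ℤ) by push_cast; ring,
      Int.toNat_natCast]
    push_cast; ring
  rw [dirichletS_eq, ofReal_zero, mul_zero, exp_zero]
  simp only [one_zpow, sum_const, nsmul_eq_mul, mul_one]
  rw [hcard, inv_mul_cancel₀]
  exact_mod_cast (by omega : 2 * L + 1 ≠ 0)

theorem dirichletS_periodic (L : ℕ) : Function.Periodic (dirichletS L) (2 * π) := fun θ => by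
  simp only [dirichletS_eq, ofReal_add, mul_add, exp_add, ofReal_mul, ofReal_ofNat]
  rw [show I * (2 * π) = 2 * π * I by ring, exp_two_pi_mul_I, mul_one]

theorem norm_dirichletS_le_half {L : ℕ} {θ : ℝ} (hθ₀ : 2 * π / (2 * L + 1) ≤ |θ|)
    (hθ : |θ| ≤ π) : ‖dirichletS L θ‖ ≤ 1 / 2 := by
  have hL : (0 : ℝ) < 2 * L + 1 := by positivity
  have hchord : 4 / (2 * L + 1) ≤ ‖exp (I * θ) - 1‖ := by
    calc 4 / (2 * L + 1) = 2 / π * (2 * π / (2 * L + 1)) := by field_simp; ring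
      _ ≤ 2 / π * |θ| := by gcongr
      _ ≤ _ := two_div_pi_mul_abs_le_norm_exp_I_mul_sub_one hθ
  have hsum := norm_sum_Icc_zpow_le (z := exp (I * θ)) (by simp) L
  have h2L : ‖(2 * (L : ℂ) + 1)⁻¹‖ = (2 * (L : ℝ) + 1)⁻¹ := by
    rw [norm_inv, show 2 * (L : ℂ) + 1 = ((2 * L + 1 : ℕ) : ℂ) by push_cast; ring,
      Complex.norm_natCast]
    push_cast; ring
  rw [dirichletS_eq, norm_mul, h2L, inv_mul_le_iff₀ hL]
  rw [div_le_iff₀ hL] at hchord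
  nlinarith [norm_nonneg (∑ l ∈ Icc (-(L : ℤ)) L, exp (I * θ) ^ l)]

theorem exists_int_abs_sub_two_pi_mul_le_pi (x : ℝ) : ∃ m : ℤ, |x - 2 * π * m| ≤ π := by
  refine ⟨round (x / (2 * π)), ?_⟩
  have h2π : (0 : ℝ) < 2 * π := by positivity
  have := abs_sub_round (x / (2 * π))
  calc |x - 2 * π * round (x / (2 * π))| = 2 * π * |x / (2 * π) - round (x / (2 * π))| := by
        rw [← abs_of_pos h2π, ← abs_mul, abs_of_pos h2π, mul_sub, mul_div_cancel₀ _ h2π.ne']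
    _ ≤ 2 * π * (1 / 2) := by gcongr
    _ = π := by ring

theorem norm_mul_add_lt_norm_add {R : Type*} [NormedRing R] {B s e₁ e₂ : R} {η : ℝ}
    (hs : ‖s‖ ≤ 1 / 2) (he₁ : ‖e₁‖ ≤ η) (he₂ : ‖e₂‖ ≤ η) (hη : η < ‖B‖ / 4) :
    ‖B * s + e₂‖ < ‖B + e₁‖ := by
  calc ‖B * s + e₂‖ ≤ ‖B‖ * ‖s‖ + ‖e₂‖ :=
        (norm_add_le _ _).trans (by gcongr; exact norm_mul_le B s)
    _ ≤ ‖B‖ * (1 / 2) + η := by gcongr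
    _ < ‖B‖ - η := by linarith
    _ ≤ ‖B + e₁‖ := by
      have := norm_sub_le (B + e₁) e₁
      rw [add_sub_cancel_right] at this
      linarith

theorem stmt_12_general (L : ℕ) (B₁ : ℂ) (θ₁ : ℝ)
    (e : ℝ → ℂ) (η : ℝ) (he : ∀ θ : ℝ, ‖e θ‖ ≤ η)
    (hη : η < ‖B₁‖ / 4) :
    ∀ θs : ℝ,
      ‖B₁ * dirichletS L (θ₁ - θ₁) + e θ₁‖
        ≤ ‖B₁ * dirichletS L (θs - θ₁) + e θs‖ →
      ∃ m : ℤ, |θs - θ₁ - 2 * π * m| ≤ 2 * π / (2 * L + 1) := by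
  intro θs hle
  obtain ⟨m, hm⟩ := exists_int_abs_sub_two_pi_mul_le_pi (θs - θ₁)
  refine ⟨m, le_of_not_gt fun hfar => ?_⟩
  have hS : ‖dirichletS L (θs - θ₁)‖ ≤ 1 / 2 := by
    rw [← (dirichletS_periodic L).sub_int_mul_eq m, mul_comm]
    exact norm_dirichletS_le_half hfar.le hm
  rw [sub_self, dirichletS_zero, mul_one] at hle
  exact hle.not_gt (norm_mul_add_lt_norm_add hS (he θ₁) (he θs) hη)

/-- Stability of NMLA peak picking for a single wave: if
`G(θ) = B₁S_L(θ − θ₁) + e(θ)` with `|e| ≤ η < |B₁|/4`, then any `θ*` with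
`|G(θ*)| ≥ |G(θ₁)|` (in particular any maximizer of `|G|`) lies within angular
distance `2π/(2L+1)` of `θ₁` modulo `2π`. -/
theorem stmt_12 (L : ℕ) (hL : 1 ≤ L) (B₁ : ℂ) (hB₁ : B₁ ≠ 0) (θ₁ : ℝ)
    (e : ℝ → ℂ) (η : ℝ) (he : ∀ θ : ℝ, ‖e θ‖ ≤ η)
    (hη : η < ‖B₁‖ / 4) :
    ∀ θs : ℝ,
      ‖B₁ * dirichletS L (θ₁ - θ₁) + e θ₁‖
        ≤ ‖B₁ * dirichletS L (θs - θ₁) + e θs‖ →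
      ∃ m : ℤ, |θs - θ₁ - 2 * π * m| ≤ 2 * π / (2 * L + 1) :=
  stmt_12_general L B₁ θ₁ e η he hη
end

section
/- Let d ≥ 1, x₀ ∈ E = EuclideanSpace ℝ (Fin d), C_ε > 0, let A : E → ℝ be continuously differentiable and φ : E → ℝ twice continuously differentiable on B = closedBall(x₀, C_ε), with ∇φ(x₀) ≠ 0. Set C₁ := sup_B ‖∇A‖, C₂ := sup_B |A|, C₃ := sup_B ‖∇²φ‖, η₀ := ‖∇φ(x₀)‖, and define u, u₀, δu, δU as follows: u(x) = A(x)e^{iωφ(x)}, u₀(x) = A(x₀)e^{iω(φ(x₀)+⟨∇φ(x₀), x−x₀⟩)}, δu = u − u₀, and δU(x) = (1/(iωη₀))·D_ŝ(δu)(x) + δu(x) for a unit vector ŝ. Then for every ω ≥ 1, setting r := C_ε·ω^{-1/2}, for every unit vector ŝ and x = x₀ + r ŝ, |δU(x)| ≤ C_ε² C₂ C₃ + ( C₁/η₀ + 2 C_ε C₁ + C_ε C₂ C₃/η₀ )·ω^{-1/2}. -/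
/-!
Write `x = x₀ + r ŝ`, let `E₁`, `E₂` be the phases of `u` and `u₀` at `x`, and
`κ = 1 + ⟨∇φ(x₀), ŝ⟩ / η₀ ∈ [0, 2]`. Expanding `D_ŝ δu`, the impedance perturbation is
`E₁ (D_ŝA(x) / (iωη₀) + A(x) (Dφ(x) - Dφ(x₀)) ŝ / η₀ + κ (A(x) - A(x₀))) + κ A(x₀) (E₁ - E₂)`.
The mean value inequality bounds the middle terms by `C₂C₃r/η₀` and `2C₁r`, and the second order
Taylor bound `|φ(x) - φ(x₀) - ⟨∇φ(x₀), x - x₀⟩| ≤ C₃r²/2` gives `‖E₁ - E₂‖ ≤ ωC₃r²/2`.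
For `r = C_ε ω^{-1/2}` the last term is the frequency-independent `C_ε²C₂C₃`, all others are
`O(ω^{-1/2})`.
-/

open Complex Metric Topology
open scoped InnerProductSpace

theorem norm_cexp_I_mul_sub_cexp_I_mul_le (a b : ℝ) :
    ‖cexp (I * a) - cexp (I * b)‖ ≤ |a - b| := by
  have h : cexp (I * a) - cexp (I * b) = cexp (I * b) * (cexp (I * ↑(a - b)) - 1) := by
    rw [mul_sub, ← Complex.exp_add]; push_cast; ring_nf
  rw [h, norm_mul, norm_exp_I_mul_ofReal, one_mul]
  exact Real.norm_exp_I_mul_ofReal_sub_one_le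

theorem norm_cexp_I_mul_ofReal_mul (ω a : ℝ) : ‖cexp (I * (ω : ℂ) * a)‖ = 1 := by
  rw [mul_assoc, ← ofReal_mul, norm_exp_I_mul_ofReal]

theorem norm_cexp_I_mul_ofReal_mul_sub_le (ω a b : ℝ) :
    ‖cexp (I * (ω : ℂ) * a) - cexp (I * (ω : ℂ) * b)‖ ≤ |ω| * |a - b| := by
  simpa only [mul_assoc, ← ofReal_mul, ← mul_sub, abs_mul] using
    norm_cexp_I_mul_sub_cexp_I_mul_le (ω * a) (ω * b)

open Set in
theorem Convex.norm_image_sub_sub_fderivWithin_le {E F : Type*} [NormedAddCommGroup E]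
    [NormedSpace ℝ E] [NormedAddCommGroup F] [NormedSpace ℝ F] {f : E → F} {s : Set E}
    {x y : E} {C : ℝ} (hf : DifferentiableOn ℝ f s)
    (hf' : ∀ z ∈ s, ‖fderivWithin ℝ f s z - fderivWithin ℝ f s x‖ ≤ C * ‖z - x‖)
    (hs : Convex ℝ s) (hx : x ∈ s) (hy : y ∈ s) :
    ‖f y - f x - fderivWithin ℝ f s x (y - x)‖ ≤ C / 2 * ‖y - x‖ ^ 2 := by
  set v := y - x
  set f' := fderivWithin ℝ f s
  have hγs : ∀ t ∈ Icc (0 : ℝ) 1, x + t • v ∈ s := fun t ht => hs.add_smul_sub_mem hx hy ht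
  have hγ : ∀ t : ℝ, HasDerivAt (fun t : ℝ => x + t • v) v t := fun t => by
    simpa using ((hasDerivAt_id t).smul_const v).const_add x
  have hg : ∀ t ∈ Ico (0 : ℝ) 1, HasDerivWithinAt (fun t : ℝ => f (x + t • v) - f x - t • f' x v)
      ((f' (x + t • v) - f' x) v) (Ici t) t := by
    intro t ht
    have hcomp := ((hf _ (hγs t (Ico_subset_Icc_self ht))).hasFDerivWithinAt.comp_hasDerivWithinAt
      t (hγ t).hasDerivWithinAt hγs).mono_of_mem_nhdsWithin (Icc_mem_nhdsGE_of_mem ht)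
    exact ((hcomp.sub_const (f x)).sub ((hasDerivWithinAt_id t _).smul_const (f' x v))).congr_deriv
      (by simp [f'])
  have hg_cont : ContinuousOn (fun t : ℝ => f (x + t • v) - f x - t • f' x v) (Icc 0 1) :=
    ((hf.continuousOn.comp (fun t _ => (hγ t).continuousAt.continuousWithinAt) hγs).sub
      continuousOn_const).sub (continuousOn_id.smul continuousOn_const)
  have hbound : ∀ t ∈ Ico (0 : ℝ) 1, ‖(f' (x + t • v) - f' x) v‖ ≤ C * ‖v‖ ^ 2 * t := by
    intro t ht
    calc ‖(f' (x + t • v) - f' x) v‖ ≤ C * ‖x + t • v - x‖ * ‖v‖ :=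
          ((f' (x + t • v) - f' x).le_opNorm v).trans
            (by gcongr; exact hf' _ (hγs t (Ico_subset_Icc_self ht)))
      _ = C * ‖v‖ ^ 2 * t := by
          rw [add_sub_cancel_left, norm_smul, Real.norm_of_nonneg ht.1]; ring
  have hB : ∀ t : ℝ, HasDerivAt (fun t : ℝ => C / 2 * ‖v‖ ^ 2 * t ^ 2) (C * ‖v‖ ^ 2 * t) t :=
    fun t => by simpa using ((hasDerivAt_pow 2 t).const_mul (C / 2 * ‖v‖ ^ 2)).congr_deriv (by ring)
  simpa [v] using image_norm_le_of_norm_deriv_right_le_deriv_boundary hg_cont hg (by simp) hB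
    hbound (right_mem_Icc.2 zero_le_one)

theorem HasFDerivWithinAt.ofReal_mul_cexp_I_mul {E : Type*} [NormedAddCommGroup E]
    [NormedSpace ℝ E] {A φ : E → ℝ} {A' φ' : E →L[ℝ] ℝ} {s : Set E} {x : E}
    (hA : HasFDerivWithinAt A A' s x) (hφ : HasFDerivWithinAt φ φ' s x) (ω : ℝ) :
    HasFDerivWithinAt (fun y => (A y : ℂ) * cexp (I * (ω : ℂ) * (φ y : ℂ)))
      (cexp (I * (ω : ℂ) * (φ x : ℂ))
        • (ofRealCLM.comp A' + ((A x : ℂ) * (I * (ω : ℂ))) • ofRealCLM.comp φ')) s x := by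
  have hA' := ofRealCLM.hasFDerivAt.comp_hasFDerivWithinAt x hA
  have hφ' := ((ofRealCLM.hasFDerivAt.comp_hasFDerivWithinAt x hφ).const_mul (I * (ω : ℂ))).cexp
  refine (hA'.mul hφ').congr_fderiv ?_
  ext v
  simp only [Function.comp_apply, ofRealCLM_apply, add_apply, smul_apply,
    ContinuousLinearMap.comp_apply, smul_eq_mul]
  ring

theorem fderivWithin_wave_sub_planeWave_apply {E : Type*} [NormedAddCommGroup E]
    [InnerProductSpace ℝ E] {A φ : E → ℝ} {s : Set E} {x x₀ g : E} {ω : ℝ} {δu : E → ℂ}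
    (hδu : ∀ y, δu y = (A y : ℂ) * cexp (I * (ω : ℂ) * φ y)
      - (A x₀ : ℂ) * cexp (I * (ω : ℂ) * ((φ x₀ + ⟪g, y - x₀⟫_ℝ : ℝ) : ℂ)))
    (hs : UniqueDiffWithinAt ℝ s x) (hA : DifferentiableWithinAt ℝ A s x)
    (hφ : DifferentiableWithinAt ℝ φ s x) (v : E) :
    fderivWithin ℝ δu s x v =
      (fderivWithin ℝ A s x v + A x * (I * (ω : ℂ) * fderivWithin ℝ φ s x v))
          * cexp (I * (ω : ℂ) * φ x)
        - A x₀ * (I * (ω : ℂ) * ⟪g, v⟫_ℝ)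
          * cexp (I * (ω : ℂ) * ((φ x₀ + ⟪g, x - x₀⟫_ℝ : ℝ) : ℂ)) := by
  obtain rfl : δu = _ := funext hδu
  have hwave := HasFDerivWithinAt.ofReal_mul_cexp_I_mul hA.hasFDerivWithinAt hφ.hasFDerivWithinAt ω
  have hphase : HasFDerivWithinAt (fun y => φ x₀ + ⟪g, y - x₀⟫_ℝ) (innerSL ℝ g) s x :=
    (((innerSL ℝ g).hasFDerivAt.comp x ((hasFDerivAt_id x).sub_const x₀)).const_add
      (φ x₀)).hasFDerivWithinAt
  have hplane := (hasFDerivWithinAt_const (A x₀) x s).ofReal_mul_cexp_I_mul hphase ω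
  rw [(hwave.fun_sub hplane).fderivWithin hs]
  simp only [smul_add, ofReal_add, ContinuousLinearMap.comp_zero, zero_add, sub_apply, add_apply,
    smul_apply, ContinuousLinearMap.comp_apply, ofRealCLM_apply, smul_eq_mul, coe_innerSL_apply]
  ring

/-- `a = D_v A(x)`, `α = A(x)`, `β = A(x₀)`, `q = Dφ(x) v`, `p = ⟨∇φ(x₀), v⟩`, `η = ‖∇φ(x₀)‖`,
and `E₁`, `E₂` are the phases of `u` and `u₀` at `x`. -/
theorem norm_impedance_le {a α β q p η ω : ℝ} {E₁ E₂ : ℂ} (hE₁ : ‖E₁‖ = 1) (hη : 0 < η)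
    (hω : 0 < ω) (hp : |p| ≤ η) :
    ‖1 / (I * ω * η) * ((a + α * (I * ω * q)) * E₁ - β * (I * ω * p) * E₂)
        + (α * E₁ - β * E₂)‖
      ≤ |a| / (ω * η) + |α| * |q - p| / η + 2 * |α - β| + 2 * |β| * ‖E₁ - E₂‖ := by
  set κ : ℝ := 1 + p / η
  have hκ : |κ| ≤ 2 := by
    rw [abs_le] at hp ⊢
    constructor
    · have : -1 ≤ p / η := by rw [le_div_iff₀ hη]; linarith
      linarith
    · have : p / η ≤ 1 := by rw [div_le_iff₀ hη]; linarith
      linarith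
  have hdecomp : 1 / (I * ω * η) * ((a + α * (I * ω * q)) * E₁ - β * (I * ω * p) * E₂)
        + (α * E₁ - β * E₂)
      = E₁ * (a / (I * ω * η) + ((α * (q - p) / η : ℝ) : ℂ) + ((κ * (α - β) : ℝ) : ℂ))
        + β * κ * (E₁ - E₂) := by
    have hω' : (ω : ℂ) ≠ 0 := ofReal_ne_zero.2 hω.ne'
    have hη' : (η : ℂ) ≠ 0 := ofReal_ne_zero.2 hη.ne'
    push_cast [κ]
    field_simp
    ring
  have hE₁' : ‖E₁‖ ≤ 1 := hE₁.le
  rw [hdecomp]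
  calc _ ≤ ‖E₁‖ * (‖(a : ℂ) / (I * ω * η)‖ + |α * (q - p) / η| + |κ * (α - β)|)
          + |β| * |κ| * ‖E₁ - E₂‖ := by
        refine (norm_add_le _ _).trans (add_le_add ?_ (by simp))
        rw [norm_mul]
        gcongr
        refine (norm_add₃_le ..).trans_eq ?_
        simp only [norm_real, Real.norm_eq_abs]
    _ ≤ 1 * (|a| / (ω * η) + |α| * |q - p| / η + 2 * |α - β|) + |β| * 2 * ‖E₁ - E₂‖ := by
        have ha : ‖(a : ℂ) / (I * ω * η)‖ = |a| / (ω * η) := by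
          simp [abs_of_pos hω, abs_of_pos hη]
        rw [ha, abs_div, abs_mul, abs_mul, abs_of_pos hη]
        gcongr
    _ = _ := by ring

theorem norm_impedance_perturbation_le {E : Type*} [NormedAddCommGroup E]
    [InnerProductSpace ℝ E] [CompleteSpace E] {s : Set E} {x₀ x v : E} {A φ : E → ℝ}
    {C₁ C₂ C₃ ω : ℝ} {δu : E → ℂ} (hs : Convex ℝ s) (hs₀ : s ∈ 𝓝 x₀)
    (hA : ContDiffOn ℝ 1 A s) (hφ : ContDiffOn ℝ 2 φ s) (hgrad : gradient φ x₀ ≠ 0)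
    (hC₁ : ∀ y ∈ s, ‖fderivWithin ℝ A s y‖ ≤ C₁) (hC₂ : ∀ y ∈ s, |A y| ≤ C₂)
    (hC₃ : ∀ y ∈ s, ‖fderivWithin ℝ (fderivWithin ℝ φ s) s y‖ ≤ C₃) (hω : 0 < ω)
    (hδu : ∀ y, δu y = (A y : ℂ) * cexp (I * (ω : ℂ) * (φ y : ℂ))
      - (A x₀ : ℂ) * cexp (I * (ω : ℂ) * ((φ x₀ + ⟪gradient φ x₀, y - x₀⟫_ℝ : ℝ) : ℂ)))
    (hx : x ∈ s) (hv : ‖v‖ = 1) :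
    ‖1 / (I * (ω : ℂ) * ((‖gradient φ x₀‖ : ℝ) : ℂ)) * fderivWithin ℝ δu s x v + δu x‖
      ≤ C₁ / (ω * ‖gradient φ x₀‖) + C₂ * C₃ * ‖x - x₀‖ / ‖gradient φ x₀‖
        + 2 * C₁ * ‖x - x₀‖ + C₂ * C₃ * ω * ‖x - x₀‖ ^ 2 := by
  set g := gradient φ x₀
  set r := ‖x - x₀‖
  have hx₀ : x₀ ∈ s := mem_of_mem_nhds hs₀
  have hs_unique : UniqueDiffOn ℝ s :=
    uniqueDiffOn_convex hs ⟨x₀, mem_interior_iff_mem_nhds.2 hs₀⟩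
  have hA_diff := hA.differentiableOn one_ne_zero
  have hφ_diff := hφ.differentiableOn two_ne_zero
  have hg : ∀ w, ⟪g, w⟫_ℝ = fderivWithin ℝ φ s x₀ w := fun w => by
    rw [fderivWithin_of_mem_nhds hs₀]; exact InnerProductSpace.toDual_symm_apply
  have hφ'_lip : ∀ y ∈ s, ‖fderivWithin ℝ φ s y - fderivWithin ℝ φ s x₀‖ ≤ C₃ * ‖y - x₀‖ :=
    fun y hy => hs.norm_image_sub_le_of_norm_fderivWithin_le
      ((hφ.fderivWithin hs_unique le_rfl).differentiableOn one_ne_zero) hC₃ hx₀ hy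
  have hA_lip : |A x - A x₀| ≤ C₁ * r := by
    simpa only [Real.norm_eq_abs] using
      hs.norm_image_sub_le_of_norm_fderivWithin_le hA_diff hC₁ hx₀ hx
  have hphase : ‖cexp (I * (ω : ℂ) * (φ x : ℂ))
      - cexp (I * (ω : ℂ) * ((φ x₀ + ⟪g, x - x₀⟫_ℝ : ℝ) : ℂ))‖ ≤ ω * (C₃ / 2 * r ^ 2) := by
    refine (norm_cexp_I_mul_ofReal_mul_sub_le _ _ _).trans ?_
    rw [abs_of_pos hω, hg, ← sub_sub, ← Real.norm_eq_abs]
    gcongr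
    exact hs.norm_image_sub_sub_fderivWithin_le hφ_diff hφ'_lip hx₀ hx
  have ha : |fderivWithin ℝ A s x v| ≤ C₁ := by
    simpa [hv] using (fderivWithin ℝ A s x).le_of_opNorm_le (hC₁ x hx) v
  have hq : |fderivWithin ℝ φ s x v - ⟪g, v⟫_ℝ| ≤ C₃ * r := by
    simpa [hg, hv] using
      (fderivWithin ℝ φ s x - fderivWithin ℝ φ s x₀).le_of_opNorm_le (hφ'_lip x hx) v
  have hp : |⟪g, v⟫_ℝ| ≤ ‖g‖ := by simpa [hv] using abs_real_inner_le_norm g v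
  have hC₂_nonneg : 0 ≤ C₂ := (abs_nonneg _).trans (hC₂ x₀ hx₀)
  rw [fderivWithin_wave_sub_planeWave_apply hδu (hs_unique x hx) (hA_diff x hx) (hφ_diff x hx),
    hδu x]
  calc _ ≤ _ := norm_impedance_le (norm_cexp_I_mul_ofReal_mul ω (φ x)) (norm_pos_iff.2 hgrad) hω hp
    _ ≤ C₁ / (ω * ‖g‖) + C₂ * (C₃ * r) / ‖g‖ + 2 * (C₁ * r) + 2 * C₂ * (ω * (C₃ / 2 * r ^ 2)) := by
        gcongr
        exacts [hC₂ x hx, hC₂ x₀ hx₀]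
    _ = _ := by ring

theorem stmt_15_general {d : ℕ}
    (x₀ : EuclideanSpace ℝ (Fin d)) (Cε : ℝ) (hCε : 0 < Cε)
    (A φ : EuclideanSpace ℝ (Fin d) → ℝ)
    (hA : ContDiffOn ℝ 1 A (closedBall x₀ Cε))
    (hφ : ContDiffOn ℝ 2 φ (closedBall x₀ Cε))
    (hgrad : gradient φ x₀ ≠ 0)
    (C₁ C₂ C₃ : ℝ)
    (hC₁ : ∀ y ∈ closedBall x₀ Cε, ‖fderivWithin ℝ A (closedBall x₀ Cε) y‖ ≤ C₁)
    (hC₂ : ∀ y ∈ closedBall x₀ Cε, |A y| ≤ C₂)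
    (hC₃ : ∀ y ∈ closedBall x₀ Cε,
      ‖fderivWithin ℝ (fun z => fderivWithin ℝ φ (closedBall x₀ Cε) z)
          (closedBall x₀ Cε) y‖ ≤ C₃) :
    ∀ ω : ℝ, 1 ≤ ω →
      ∀ δu : EuclideanSpace ℝ (Fin d) → ℂ,
      (∀ y, δu y = (A y : ℂ) * Complex.exp (Complex.I * (ω : ℂ) * (φ y : ℂ))
          - (A x₀ : ℂ) * Complex.exp (Complex.I * (ω : ℂ)
              * ((φ x₀ + ⟪gradient φ x₀, y - x₀⟫_ℝ : ℝ) : ℂ))) →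
      ∀ s : EuclideanSpace ℝ (Fin d), ‖s‖ = 1 →
        ‖((1 / (Complex.I * (ω : ℂ) * ((‖gradient φ x₀‖ : ℝ) : ℂ)))
              * fderivWithin ℝ δu (closedBall x₀ Cε)
                  (x₀ + (Cε * ω ^ (-(1/2 : ℝ))) • s) s
            + δu (x₀ + (Cε * ω ^ (-(1/2 : ℝ))) • s))‖
        ≤ Cε ^ 2 * C₂ * C₃
          + (C₁ / ‖gradient φ x₀‖ + 2 * Cε * C₁ + Cε * C₂ * C₃ / ‖gradient φ x₀‖)
              * ω ^ (-(1/2 : ℝ)) := by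
  intro ω hω δu hδu s hs
  have hω₀ : 0 < ω := one_pos.trans_le hω
  set ρ := ω ^ (-(1/2 : ℝ))
  have hωρ : ω * ρ ^ 2 = 1 := by
    rw [← Real.rpow_natCast, ← Real.rpow_mul hω₀.le]
    norm_num [Real.rpow_neg_one, hω₀.ne']
  have hω_inv : ω⁻¹ ≤ ρ := by
    rw [← Real.rpow_neg_one]; exact Real.rpow_le_rpow_of_exponent_le hω (by norm_num)
  have hdist : ‖x₀ + (Cε * ρ) • s - x₀‖ = Cε * ρ := by
    rw [add_sub_cancel_left, norm_smul, hs, mul_one, Real.norm_of_nonneg (by positivity)]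
  have hx : x₀ + (Cε * ρ) • s ∈ closedBall x₀ Cε := by
    rw [mem_closedBall, dist_eq_norm, hdist]
    exact mul_le_of_le_one_right hCε.le (Real.rpow_le_one_of_one_le_of_nonpos hω (by norm_num))
  have hC₁_nonneg : 0 ≤ C₁ := (norm_nonneg _).trans (hC₁ x₀ (mem_closedBall_self hCε.le))
  refine (norm_impedance_perturbation_le (convex_closedBall x₀ Cε) (closedBall_mem_nhds x₀ hCε)
    hA hφ hgrad hC₁ hC₂ hC₃ hω₀ hδu hx hs).trans ?_
  rw [hdist]
  calc _ = C₁ / ‖gradient φ x₀‖ * ω⁻¹ + (2 * Cε * C₁ + Cε * C₂ * C₃ / ‖gradient φ x₀‖) * ρ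
          + Cε ^ 2 * C₂ * C₃ * (ω * ρ ^ 2) := by
        ring
    _ ≤ C₁ / ‖gradient φ x₀‖ * ρ
          + (2 * Cε * C₁ + Cε * C₂ * C₃ / ‖gradient φ x₀‖) * ρ + Cε ^ 2 * C₂ * C₃ * 1 := by
        rw [hωρ]; gcongr
    _ = _ := by ring

/-- Key scaling for NMLA applied to wave-field data: sampling the impedance perturbation
`δU(x) = (1/(iωη₀))D_ŝ(δu)(x) + δu(x)` of `u = A e^{iωφ}` relative to its local
plane-wave approximation at `x₀`, on the circle of radius `r = C_ε ω^{-1/2}`, gives for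
`ω ≥ 1` the bound `|δU| ≤ C_ε²C₂C₃ + (C₁/η₀ + 2C_εC₁ + C_εC₂C₃/η₀)ω^{-1/2}`, where
`C₁ = sup_B ‖∇A‖`, `C₂ = sup_B |A|`, `C₃ = sup_B ‖∇²φ‖` on `B = closedBall(x₀, C_ε)` and
`η₀ = ‖∇φ(x₀)‖`. -/
theorem stmt_15 {d : ℕ} (hd : 1 ≤ d)
    (x₀ : EuclideanSpace ℝ (Fin d)) (Cε : ℝ) (hCε : 0 < Cε)
    (A φ : EuclideanSpace ℝ (Fin d) → ℝ)
    (hA : ContDiffOn ℝ 1 A (closedBall x₀ Cε))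
    (hφ : ContDiffOn ℝ 2 φ (closedBall x₀ Cε))
    (hgrad : gradient φ x₀ ≠ 0)
    (C₁ C₂ C₃ : ℝ)
    (hC₁ : ∀ y ∈ closedBall x₀ Cε, ‖fderivWithin ℝ A (closedBall x₀ Cε) y‖ ≤ C₁)
    (hC₂ : ∀ y ∈ closedBall x₀ Cε, |A y| ≤ C₂)
    (hC₃ : ∀ y ∈ closedBall x₀ Cε,
      ‖fderivWithin ℝ (fun z => fderivWithin ℝ φ (closedBall x₀ Cε) z)
          (closedBall x₀ Cε) y‖ ≤ C₃) :
    ∀ ω : ℝ, 1 ≤ ω →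
      ∀ δu : EuclideanSpace ℝ (Fin d) → ℂ,
      (∀ y, δu y = (A y : ℂ) * Complex.exp (Complex.I * (ω : ℂ) * (φ y : ℂ))
          - (A x₀ : ℂ) * Complex.exp (Complex.I * (ω : ℂ)
              * ((φ x₀ + ⟪gradient φ x₀, y - x₀⟫_ℝ : ℝ) : ℂ))) →
      ∀ s : EuclideanSpace ℝ (Fin d), ‖s‖ = 1 →
        ‖((1 / (Complex.I * (ω : ℂ) * ((‖gradient φ x₀‖ : ℝ) : ℂ)))
              * fderivWithin ℝ δu (closedBall x₀ Cε)
                  (x₀ + (Cε * ω ^ (-(1/2 : ℝ))) • s) s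
            + δu (x₀ + (Cε * ω ^ (-(1/2 : ℝ))) • s))‖
        ≤ Cε ^ 2 * C₂ * C₃
          + (C₁ / ‖gradient φ x₀‖ + 2 * Cε * C₁ + Cε * C₂ * C₃ / ‖gradient φ x₀‖)
              * ω ^ (-(1/2 : ℝ)) :=
  stmt_15_general x₀ Cε hCε A φ hA hφ hgrad C₁ C₂ C₃ hC₁ hC₂ hC₃
end
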